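/- arXiv:2509.06309 — 4 statements merged into one kernel-verified Lean document; each statement's English description precedes it below -/
import Mathlib

section
/- Suppose S = (S_1,...,S_d) is a family of isometries with orthogonal ranges (S_i* S_j = δ_{ij} I) on a Hilbert space K, P ∈ L(K) is an orthogonal projection, and M ⊆ K is a closed subspace invariant under all S_j*. If ∑_{i=1}^d S_i P S_i* = P holds on M, then P S_j* = S_j* P on M for every j = 1,...,d. -/
/-- if `S₁,…,S_d` are isometries with orthogonal ranges, `P` an
orthogonal projection, `M` a closed subspace invariant under all `S_j*`, and
`∑ᵢ Sᵢ P Sᵢ* = P` on `M`, then `P S_j* = S_j* P` on `M` for every `j`. -/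
theorem proj_commutes_on_invariant_subspace
    {K : Type*} [NormedAddCommGroup K] [InnerProductSpace ℂ K] [CompleteSpace K]
    {d : ℕ} (S : Fin d → K →L[ℂ] K)
    (hortho : ∀ i j, (ContinuousLinearMap.adjoint (S i)) ∘L (S j)
      = if i = j then (1 : K →L[ℂ] K) else 0)
    (P : K →L[ℂ] K) (hPidem : IsIdempotentElem P) (hPsa : IsSelfAdjoint P)
    (M : Submodule ℂ K) (hMclosed : IsClosed (M : Set K))
    (hMinv : ∀ j, ∀ x ∈ M, (ContinuousLinearMap.adjoint (S j)) x ∈ M)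
    (heq : ∀ x ∈ M, ∑ i, (S i) (P ((ContinuousLinearMap.adjoint (S i)) x)) = P x) :
    ∀ j, ∀ x ∈ M, P ((ContinuousLinearMap.adjoint (S j)) x)
      = (ContinuousLinearMap.adjoint (S j)) (P x) := by
  intro j x hx
  have h := congrArg (ContinuousLinearMap.adjoint (S j)) (heq x hx)
  rw [map_sum] at h
  calc P ((ContinuousLinearMap.adjoint (S j)) x)
      = ∑ i, ((ContinuousLinearMap.adjoint (S j)) ∘L (S i))
          (P ((ContinuousLinearMap.adjoint (S i)) x)) := by
        rw [Finset.sum_eq_single j]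
        · simp [hortho]
        · intro i _ hne
          simp [hortho, hne.symm]
        · simp
    _ = (ContinuousLinearMap.adjoint (S j)) (P x) := by
        simpa using h
end

section
/- If a positive-definite operator-valued kernel K on the free monoid F_d^+ admits a Kolmogorov factorization K(α,β) = V_α* V_β with maps V_α : H → H', and K_Σ ≤ K in the positive-definite order (i.e., K − K_Σ is positive definite, where K_Σ(α,β) = ∑_i K(αi,βi)), then the maps B_i defined on span{V_α u} by B_i(V_α u) = V_{αi} u are well defined and extend to bounded operators on the closure of the span with ∑_{i=1}^d B_i* B_i ≤ I. -/
/-!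
The kernel inequality `K_Σ ≤ K`, evaluated on a finite family `(α_j, u_j)`, says exactly that
`∑ᵢ ‖∑ⱼ V_{α_j i} u_j‖² ≤ ‖∑ⱼ V_{α_j} u_j‖²`. Hence the shifts `∑ⱼ V_{α_j} u_j ↦ ∑ⱼ V_{α_j i} u_j`
are well defined on the span of the `V_α u` (a combination that vanishes is sent to zero) and
form a row contraction there; by density they extend to all of `H'`, and the inequality
`∑ᵢ ‖Bᵢ x‖² ≤ ‖x‖²` is `⟪(1 - ∑ᵢ Bᵢ* Bᵢ) x, x⟫ ≥ 0`.
-/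

open scoped ComplexInnerProductSpace

noncomputable def opKernel {H H' : Type*}
    [NormedAddCommGroup H] [InnerProductSpace ℂ H] [CompleteSpace H]
    [NormedAddCommGroup H'] [InnerProductSpace ℂ H'] [CompleteSpace H']
    {d : ℕ} (V : List (Fin d) → H →L[ℂ] H') (α β : List (Fin d)) : H →L[ℂ] H :=
  (ContinuousLinearMap.adjoint (V α)) ∘L (V β)

namespace ContinuousLinearMap

variable {𝕜 E F ι : Type*} [RCLike 𝕜] [NormedAddCommGroup E] [InnerProductSpace 𝕜 E]
  [CompleteSpace E] [NormedAddCommGroup F] [InnerProductSpace 𝕜 F] [CompleteSpace F]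
  [Fintype ι]

theorem isPositive_one_sub_sum_adjoint_comp_self (B : ι → E →L[𝕜] F)
    (h : ∀ x, ∑ i, ‖B i x‖ ^ 2 ≤ ‖x‖ ^ 2) :
    (1 - ∑ i, adjoint (B i) ∘L B i).IsPositive := by
  refine isPositive_def'.2 ⟨isPositive_one.isSelfAdjoint.sub <| isSelfAdjoint_sum _
    fun i _ => (isPositive_adjoint_comp_self (B i)).isSelfAdjoint, fun x => ?_⟩
  have hB : ∀ i, RCLike.re (inner 𝕜 ((adjoint (B i) ∘L B i) x) x) = ‖B i x‖ ^ 2 := fun i => by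
    rw [comp_apply, adjoint_inner_left, inner_self_eq_norm_sq]
  simp only [reApplyInnerSelf_apply, sub_apply, one_apply_eq_self, sum_apply, inner_sub_left,
    sum_inner, map_sub, map_sum, hB, inner_self_eq_norm_sq, sub_nonneg]
  exact h x

end ContinuousLinearMap

namespace LinearMap

variable {𝕜 M E F ι : Type*} [NontriviallyNormedField 𝕜] [AddCommGroup M] [Module 𝕜 M]
  [NormedAddCommGroup E] [NormedSpace 𝕜 E] [NormedAddCommGroup F] [NormedSpace 𝕜 F]
  [CompleteSpace F] [Fintype ι]

theorem exists_extend_of_sum_norm_sq_le (π : M →ₗ[𝕜] E) (τ : ι → M →ₗ[𝕜] F)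
    (hπ : DenseRange π) (h : ∀ f, ∑ i, ‖τ i f‖ ^ 2 ≤ ‖π f‖ ^ 2) :
    ∃ B : ι → E →L[𝕜] F, (∀ i f, B i (π f) = τ i f) ∧ ∀ x, ∑ i, ‖B i x‖ ^ 2 ≤ ‖x‖ ^ 2 := by
  have hτ : ∀ i f, ‖τ i f‖ ≤ 1 * ‖π f‖ := fun i f => by
    rw [one_mul, ← pow_le_pow_iff_left₀ (norm_nonneg _) (norm_nonneg _) two_ne_zero]
    exact (Finset.single_le_sum (fun j _ => sq_nonneg ‖τ j f‖) (Finset.mem_univ i)).trans (h f)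
  have hB : ∀ i f, (τ i).extendOfNorm π (π f) = τ i f := fun i =>
    extendOfNorm_eq hπ ⟨1, hτ i⟩
  refine ⟨fun i => (τ i).extendOfNorm π, hB, fun x => ?_⟩
  refine hπ.induction_on x (isClosed_le (by fun_prop) (by fun_prop)) fun f => ?_
  simpa only [hB] using h f

end LinearMap

namespace Kolmogorov

section Synthesis

variable {A H H' : Type*} [NormedAddCommGroup H] [NormedSpace ℂ H]
  [NormedAddCommGroup H'] [NormedSpace ℂ H'] (V : A → H →L[ℂ] H')

noncomputable def synthesis : ((A × H) →₀ ℂ) →ₗ[ℂ] H' :=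
  Finsupp.linearCombination ℂ fun p => V p.1 p.2

theorem range_synthesis :
    LinearMap.range (synthesis V) = Submodule.span ℂ (⋃ α, Set.range (V α)) := by
  rw [synthesis, Finsupp.range_linearCombination]
  congr 1
  ext
  simp [Prod.exists]

theorem synthesis_single (α : A) (u : H) : synthesis V (Finsupp.single (α, u) 1) = V α u := by
  simp [synthesis]

theorem exists_synthesis_eq_sum (f : (A × H) →₀ ℂ) :
    ∃ (N : ℕ) (α : Fin N → A) (u : Fin N → H),
      ∀ W : A → H →L[ℂ] H', synthesis W f = ∑ j, W (α j) (u j) := by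
  let e := f.support.equivFin.symm
  refine ⟨_, fun j => (e j : A × H).1, fun j => f (e j) • (e j : A × H).2, fun W => ?_⟩
  rw [synthesis, Finsupp.linearCombination_apply, Finsupp.sum, ← Finset.sum_coe_sort,
    ← e.sum_comp]
  simp only [map_smul]

end Synthesis

variable {H H' : Type*} [NormedAddCommGroup H] [InnerProductSpace ℂ H] [CompleteSpace H]
  [NormedAddCommGroup H'] [InnerProductSpace ℂ H'] [CompleteSpace H'] {d : ℕ}
  (V : List (Fin d) → H →L[ℂ] H')

theorem inner_opKernel (α β : List (Fin d)) (x y : H) :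
    ⟪x, opKernel V α β y⟫ = ⟪V α x, V β y⟫ :=
  ContinuousLinearMap.adjoint_inner_right (V α) x (V β y)

theorem norm_sum_sq_eq_re_sum_opKernel {N : ℕ} (α : Fin N → List (Fin d)) (u : Fin N → H) :
    ‖∑ j, V (α j) (u j)‖ ^ 2 = (∑ j, ∑ k, ⟪u j, opKernel V (α j) (α k) (u k)⟫).re := by
  simp only [inner_opKernel, ← inner_sum, ← sum_inner]
  exact (inner_self_eq_norm_sq (𝕜 := ℂ) _).symm

/-- `K_Σ ≤ K` in the positive-definite order, for the kernel `K = opKernel V`. -/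
def KernelSigmaLE : Prop :=
  ∀ {N : ℕ} (α : Fin N → List (Fin d)) (u : Fin N → H),
    0 ≤ (∑ j, ∑ k, (⟪u j, opKernel V (α j) (α k) (u k)⟫
      - ∑ i, ⟪u j, opKernel V (α j ++ [i]) (α k ++ [i]) (u k)⟫)).re

variable {V}

theorem sum_norm_sq_shift_le (hpd : KernelSigmaLE V) {N : ℕ} (α : Fin N → List (Fin d))
    (u : Fin N → H) :
    ∑ i, ‖∑ j, V (α j ++ [i]) (u j)‖ ^ 2 ≤ ‖∑ j, V (α j) (u j)‖ ^ 2 := by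
  have key := hpd α u
  simp only [Finset.sum_sub_distrib, Complex.sub_re] at key
  rw [← sub_nonneg, norm_sum_sq_eq_re_sum_opKernel,
    Finset.sum_congr rfl fun i _ => norm_sum_sq_eq_re_sum_opKernel (fun β => V (β ++ [i])) α u,
    ← Complex.re_sum]
  rwa [Finset.sum_comm (γ := Fin d), Finset.sum_congr rfl fun j _ => Finset.sum_comm (γ := Fin d)]

theorem sum_norm_sq_synthesis_shift_le (hpd : KernelSigmaLE V) (f : (List (Fin d) × H) →₀ ℂ) :
    ∑ i, ‖synthesis (fun α => V (α ++ [i])) f‖ ^ 2 ≤ ‖synthesis V f‖ ^ 2 := by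
  obtain ⟨N, α, u, hf⟩ := exists_synthesis_eq_sum (H' := H') f
  simpa only [hf] using sum_norm_sq_shift_le hpd α u

end Kolmogorov

/-- if the p.d. kernel `K(α,β) = V_α* V_β` satisfies `K_Σ ≤ K`
(`K − K_Σ` is positive definite), then the maps `B_i (V_α u) = V_{αi} u` are well
defined and extend to bounded operators with `∑ᵢ Bᵢ* Bᵢ ≤ I`. -/
theorem kolmogorov_row_contraction
    {H H' : Type*}
    [NormedAddCommGroup H] [InnerProductSpace ℂ H] [CompleteSpace H]
    [NormedAddCommGroup H'] [InnerProductSpace ℂ H'] [CompleteSpace H']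
    {d : ℕ} (V : List (Fin d) → H →L[ℂ] H')
    (hdense : Dense (↑(Submodule.span ℂ (⋃ α, Set.range (V α))) : Set H'))
    (hpd : ∀ {N : ℕ} (α : Fin N → List (Fin d)) (u : Fin N → H),
      0 ≤ (∑ j, ∑ k, (⟪u j, opKernel V (α j) (α k) (u k)⟫
        - ∑ i, ⟪u j, opKernel V (α j ++ [i]) (α k ++ [i]) (u k)⟫)).re) :
    ∃ B : Fin d → H' →L[ℂ] H',
      (∀ i (α : List (Fin d)) (u : H), B i (V α u) = V (α ++ [i]) u) ∧
      ((1 : H' →L[ℂ] H') -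
        ∑ i, (ContinuousLinearMap.adjoint (B i)) ∘L (B i)).IsPositive := by
  obtain ⟨B, hB, hrow⟩ := LinearMap.exists_extend_of_sum_norm_sq_le (Kolmogorov.synthesis V)
    (fun i => Kolmogorov.synthesis fun α => V (α ++ [i]))
    (by rwa [DenseRange, ← LinearMap.coe_range, Kolmogorov.range_synthesis])
    (Kolmogorov.sum_norm_sq_synthesis_shift_le hpd)
  refine ⟨B, fun i α u => ?_, ContinuousLinearMap.isPositive_one_sub_sum_adjoint_comp_self B hrow⟩
  simpa only [Kolmogorov.synthesis_single] using hB i (Finsupp.single (α, u) 1)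
end

section
/- For φ(L) = ∑_α φ_α L^α a bounded operator in the free Hardy algebra and 0 < r < 1, the radial dilate φ_r(L) := ∑_α r^{|α|} φ_α L^α satisfies ‖φ_r(L)‖ ≤ ‖φ(L)‖, where |α| denotes word length and the coefficients φ_α are the Fourier coefficients ⟨e_α, φ(L) e_∅⟩. -/
open scoped ComplexInnerProductSpace

noncomputable abbrev FockSpace (d : ℕ) := lp (fun _ : List (Fin d) => ℂ) 2

noncomputable def fockBasis {d : ℕ} (α : List (Fin d)) : FockSpace d :=
  lp.single 2 α (1 : ℂ)

/-- Membership in the closure of a set of operators in the weak operator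
topology: every WOT-basic neighborhood of `T` meets the algebra. -/
def MemWOTClosure {d : ℕ} (A : Subalgebra ℂ (FockSpace d →L[ℂ] FockSpace d))
    (T : FockSpace d →L[ℂ] FockSpace d) : Prop :=
  ∀ ε > (0 : ℝ), ∀ F : Finset (FockSpace d × FockSpace d),
    ∃ p ∈ A, ∀ z ∈ F, ‖⟪z.2, T z.1 - p z.1⟫‖ < ε

/-!
Write `R_s` for the right creation operator `e_t ↦ e_{ts}` and `D_r` for `e_α ↦ r^{|α|} e_α`.
Every operator in the WOT-closure of the algebra generated by `L` commutes with all `R_s`, so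
it is determined by its symbol `f = φ(L) e_∅` through `φ(L) e_α = R_α f`; the hypothesis on
the coefficients then says `φ_r(L) e_α = R_α D_r f`.

Put `c_∅ = 1` and `c_s = √(1 - r²)` for `s ≠ ∅`, and `V_s = c_s D_r R_s*`. On `e_α` the
identity `Σ_s V_s* V_s = 1` is the telescoping sum `r^{2|α|} + Σ_{k < |α|} (1 - r²) r^{2k} = 1`
over the suffixes `s` of `α`, and the same computation gives `Σ_s V_s* φ(L) V_s = φ_r(L)`.
So `φ_r(L) = W_r* (φ(L) ⊗ 1) W_r` for the isometry `W_r = (V_s)_s`, and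
`‖φ_r(L)‖ ≤ ‖φ(L)‖` by Cauchy–Schwarz. Only finitely many `V_s` see a given `e_α`, so the
argument runs with finite sums on finitely supported vectors, followed by a density step.
-/

open ContinuousLinearMap Filter

theorem sq_norm_mul_le_of_norm_le_one {𝕜 : Type*} [NormedDivisionRing 𝕜] {w : 𝕜} (hw : ‖w‖ ≤ 1)
    (a : 𝕜) : ‖w * a‖ ^ 2 ≤ ‖a‖ ^ 2 := by
  rw [norm_mul]
  gcongr
  exact mul_le_of_le_one_left (norm_nonneg _) hw

namespace lp

variable {𝕜 : Type*} [RCLike 𝕜] {ι κ : Type*}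

theorem norm_sq_eq_tsum (z : ℓ²(ι, 𝕜)) : ‖z‖ ^ 2 = ∑' i, ‖z i‖ ^ 2 := by
  simpa using lp.norm_rpow_eq_tsum (p := 2) (by norm_num) z

theorem summable_norm_sq (z : ℓ²(ι, 𝕜)) : Summable fun i => ‖z i‖ ^ 2 := by
  simpa using (lp.memℓp z).summable (p := 2) (by norm_num)

theorem summable_norm_sq_mul_comp {j : ι → κ} (hj : Function.Injective j) {w : ι → 𝕜}
    (hw : ∀ i, ‖w i‖ ≤ 1) (z : ℓ²(κ, 𝕜)) : Summable fun i => ‖w i * z (j i)‖ ^ 2 :=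
  ((summable_norm_sq z).comp_injective hj).of_nonneg_of_le (fun _ => by positivity)
    fun i => sq_norm_mul_le_of_norm_le_one (hw i) _

noncomputable def weightedComap (j : ι → κ) (hj : Function.Injective j) (w : ι → 𝕜)
    (hw : ∀ i, ‖w i‖ ≤ 1) : ℓ²(κ, 𝕜) →L[𝕜] ℓ²(ι, 𝕜) :=
  LinearMap.mkContinuous
    { toFun z := ⟨fun i => w i * z (j i),
        memℓp_gen (by simpa using summable_norm_sq_mul_comp hj hw z)⟩
      map_add' z z' := by ext i; exact mul_add _ _ _
      map_smul' c z := by ext i; exact mul_left_comm _ _ _ }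
    1 fun z => by
      rw [one_mul, ← sq_le_sq₀ (norm_nonneg _) (norm_nonneg _), norm_sq_eq_tsum, norm_sq_eq_tsum]
      calc ∑' i, ‖w i * z (j i)‖ ^ 2 ≤ ∑' i, ‖z (j i)‖ ^ 2 :=
            (summable_norm_sq_mul_comp hj hw z).tsum_le_tsum
              (fun i => sq_norm_mul_le_of_norm_le_one (hw i) _)
              ((summable_norm_sq z).comp_injective hj)
        _ ≤ ∑' k, ‖z k‖ ^ 2 :=
            tsum_comp_le_tsum_of_inj (summable_norm_sq z) (fun _ => by positivity) hj

variable {j : ι → κ} {hj : Function.Injective j} {w : ι → 𝕜} {hw : ∀ i, ‖w i‖ ≤ 1}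

@[simp]
theorem weightedComap_apply (z : ℓ²(κ, 𝕜)) (i : ι) :
    weightedComap j hj w hw z i = w i * z (j i) := rfl

theorem norm_weightedComap_sq (z : ℓ²(κ, 𝕜)) :
    ‖weightedComap j hj w hw z‖ ^ 2 = ∑' i, ‖w i‖ ^ 2 * ‖z (j i)‖ ^ 2 := by
  simp [norm_sq_eq_tsum, mul_pow]

theorem dense_span_single [DecidableEq ι] :
    Dense (Submodule.span 𝕜 (Set.range fun i => (lp.single 2 i 1 : ℓ²(ι, 𝕜))) : Set ℓ²(ι, 𝕜)) := by
  have hb : ⇑(default : HilbertBasis ι 𝕜 ℓ²(ι, 𝕜)) = fun i => lp.single 2 i (1 : 𝕜) := by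
    funext i
    rw [← HilbertBasis.repr_symm_single]
    rfl
  rw [Submodule.dense_iff_topologicalClosure_eq_top, ← hb]
  exact HilbertBasis.dense_span _

theorem inner_single_one_left [DecidableEq ι] (i : ι) (z : ℓ²(ι, 𝕜)) :
    inner 𝕜 (lp.single 2 i (1 : 𝕜)) z = z i := by
  simp [lp.inner_single_left]

theorem weightedComap_single_apply [DecidableEq ι] [DecidableEq κ] (i : ι) :
    weightedComap j hj w hw (lp.single 2 (j i) 1) = w i • lp.single 2 i 1 := by
  ext k
  by_cases h : k = i <;> simp [hj.eq_iff, h]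

theorem weightedComap_single_of_notMem_range [DecidableEq κ] {k : κ} (hk : k ∉ Set.range j) :
    weightedComap j hj w hw (lp.single 2 k 1) = 0 := by
  ext i
  simpa [Pi.single_apply] using fun h : j i = k => absurd ⟨i, h⟩ hk

theorem adjoint_weightedComap_single [DecidableEq ι] [DecidableEq κ] (i : ι) :
    adjoint (weightedComap j hj w hw) (lp.single 2 i 1) = star (w i) • lp.single 2 (j i) 1 := by
  ext k
  rw [← inner_single_one_left, adjoint_inner_right, ← inner_conj_symm, inner_single_one_left]
  by_cases h : k = j i <;> simp [h, Ne.symm]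

end lp

namespace ContinuousLinearMap

theorem opNorm_le_of_dense {𝕜 E F : Type*} [NontriviallyNormedField 𝕜] [NormedAddCommGroup E]
    [NormedSpace 𝕜 E] [NormedAddCommGroup F] [NormedSpace 𝕜 F] {A : E →L[𝕜] F} {s : Set E}
    (hs : Dense s) {C : ℝ} (hC : 0 ≤ C) (h : ∀ x ∈ s, ‖A x‖ ≤ C * ‖x‖) : ‖A‖ ≤ C :=
  A.opNorm_le_bound hC fun x =>
    hs.induction (P := fun x => ‖A x‖ ≤ C * ‖x‖) h (isClosed_le (by fun_prop) (by fun_prop)) x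

section InnerProductSpace

variable {𝕜 E F ι : Type*} [RCLike 𝕜] [NormedAddCommGroup E] [InnerProductSpace 𝕜 E]
  [CompleteSpace E] [NormedAddCommGroup F] [InnerProductSpace 𝕜 F] [CompleteSpace F]

theorem norm_sum_adjoint_comp_comp_le (S : Finset ι) (V : ι → E →L[𝕜] F)
    (hV : ∀ z, ∑ i ∈ S, ‖V i z‖ ^ 2 ≤ ‖z‖ ^ 2) (T : F →L[𝕜] F) :
    ‖∑ i ∈ S, adjoint (V i) ∘L T ∘L V i‖ ≤ ‖T‖ := by
  refine opNorm_le_bound _ (norm_nonneg T) fun x => ?_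
  set y := (∑ i ∈ S, adjoint (V i) ∘L T ∘L V i) x
  have hsqrt : ∀ z, √(∑ i ∈ S, ‖V i z‖ ^ 2) ≤ ‖z‖ := fun z =>
    Real.sqrt_le_iff.mpr ⟨norm_nonneg z, hV z⟩
  have hsq : ‖y‖ * ‖y‖ ≤ ‖y‖ * (‖T‖ * ‖x‖) :=
    calc ‖y‖ * ‖y‖ = RCLike.re (inner 𝕜 y y) := (inner_self_eq_norm_mul_norm y).symm
      _ ≤ ‖inner 𝕜 y y‖ := RCLike.re_le_norm _
      _ = ‖∑ i ∈ S, inner 𝕜 (V i y) (T (V i x))‖ := by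
        simp only [y, sum_apply, comp_apply, inner_sum, adjoint_inner_right]
      _ ≤ ∑ i ∈ S, ‖V i y‖ * (‖T‖ * ‖V i x‖) := by
        refine (norm_sum_le _ _).trans (Finset.sum_le_sum fun i _ => ?_)
        exact (norm_inner_le_norm _ _).trans (by gcongr; exact le_opNorm _ _)
      _ = ‖T‖ * ∑ i ∈ S, ‖V i y‖ * ‖V i x‖ := by
        rw [Finset.mul_sum]; congr 1; ext i; ring
      _ ≤ ‖T‖ * (√(∑ i ∈ S, ‖V i y‖ ^ 2) * √(∑ i ∈ S, ‖V i x‖ ^ 2)) := by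
        gcongr; exact Real.sum_mul_le_sqrt_mul_sqrt _ _ _
      _ ≤ ‖y‖ * (‖T‖ * ‖x‖) := by
        rw [mul_left_comm]; gcongr; exacts [hsqrt y, hsqrt x]
  rcases (norm_nonneg y).eq_or_lt with hy | hy
  · rw [← hy]; positivity
  · exact le_of_mul_le_mul_left hsq hy

theorem norm_le_of_eventually_eq_sum_adjoint_comp_comp {β : Type*} {b : β → E}
    (hb : Dense (Submodule.span 𝕜 (Set.range b) : Set E)) {V : ι → E →L[𝕜] F}
    (hV : ∀ S z, ∑ i ∈ S, ‖V i z‖ ^ 2 ≤ ‖z‖ ^ 2) {T : F →L[𝕜] F} {T' : E →L[𝕜] E}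
    (h : ∀ k, ∀ᶠ S in atTop, T' (b k) = (∑ i ∈ S, adjoint (V i) ∘L T ∘L V i) (b k)) :
    ‖T'‖ ≤ ‖T‖ := by
  refine opNorm_le_of_dense hb (norm_nonneg T) fun x hx => ?_
  have hx : ∀ᶠ S in atTop, T' x = (∑ i ∈ S, adjoint (V i) ∘L T ∘L V i) x := by
    induction hx using Submodule.span_induction with
    | mem _ hx => obtain ⟨k, rfl⟩ := hx; exact h k
    | zero => simp
    | add x y _ _ hx hy => filter_upwards [hx, hy] with S hx hy; rw [map_add, map_add, hx, hy]
    | smul c x _ hx => filter_upwards [hx] with S hx; rw [map_smul, map_smul, hx]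
  obtain ⟨S, hS⟩ := hx.exists
  rw [hS]
  exact (le_opNorm _ _).trans (by gcongr; exact norm_sum_adjoint_comp_comp_le S V (hV S) T)

end InnerProductSpace

end ContinuousLinearMap

namespace FockSpace

variable {d : ℕ}

theorem inner_fockBasis_left (α : List (Fin d)) (f : FockSpace d) : ⟪fockBasis α, f⟫ = f α :=
  lp.inner_single_one_left α f

theorem ext_fockBasis {f g : FockSpace d} (h : ∀ α, ⟪fockBasis α, f⟫ = ⟪fockBasis α, g⟫) :
    f = g := by
  ext α
  simpa only [inner_fockBasis_left] using h α

theorem dense_span_fockBasis :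
    Dense (Submodule.span ℂ (Set.range (fockBasis (d := d))) : Set (FockSpace d)) :=
  lp.dense_span_single

noncomputable def rightCreation (s : List (Fin d)) : FockSpace d →L[ℂ] FockSpace d :=
  adjoint (lp.weightedComap (· ++ s) (List.append_left_injective s) 1 fun _ => by simp)

theorem rightCreation_fockBasis (s t : List (Fin d)) :
    rightCreation s (fockBasis t) = fockBasis (t ++ s) := by
  rw [rightCreation, fockBasis, lp.adjoint_weightedComap_single, fockBasis]
  simp

theorem commute_rightCreation {L : Fin d → FockSpace d →L[ℂ] FockSpace d}
    (hL : ∀ (i : Fin d) (α : List (Fin d)), L i (fockBasis α) = fockBasis (i :: α))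
    (i : Fin d) (s : List (Fin d)) : Commute (L i) (rightCreation s) := by
  refine ext_on dense_span_fockBasis ?_
  rintro _ ⟨t, rfl⟩
  simp [hL, rightCreation_fockBasis]

section RadialFrame

variable {r : ℝ}

noncomputable def radialScaling (r : ℝ) (hr : |r| ≤ 1) : FockSpace d →L[ℂ] FockSpace d :=
  lp.weightedComap id Function.injective_id (fun α => ((r ^ α.length : ℝ) : ℂ)) fun α => by
    rw [Complex.norm_real, Real.norm_eq_abs, abs_pow]
    exact pow_le_one₀ (abs_nonneg r) hr

theorem inner_fockBasis_radialScaling (hr : |r| ≤ 1) (α : List (Fin d)) (f : FockSpace d) :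
    ⟪fockBasis α, radialScaling r hr f⟫ = (r ^ α.length : ℝ) * ⟪fockBasis α, f⟫ := by
  simp only [inner_fockBasis_left]
  rfl

theorem radialScaling_fockBasis (hr : |r| ≤ 1) (α : List (Fin d)) :
    radialScaling r hr (fockBasis α) = ((r ^ α.length : ℝ) : ℂ) • fockBasis α :=
  lp.weightedComap_single_apply (j := id) α

noncomputable def frameCoeff (r : ℝ) (s : List (Fin d)) : ℝ :=
  if s = [] then 1 else √(1 - r ^ 2)

theorem abs_frameCoeff_le_one (s : List (Fin d)) : |frameCoeff r s| ≤ 1 := by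
  unfold frameCoeff
  split
  · simp
  · rw [abs_of_nonneg (Real.sqrt_nonneg _)]
    exact Real.sqrt_le_one.mpr (by nlinarith [sq_nonneg r])

theorem frameCoeff_cons_sq (hr : |r| ≤ 1) (a : Fin d) (α : List (Fin d)) :
    frameCoeff r (a :: α) ^ 2 = 1 - r ^ 2 :=
  Real.sq_sqrt (sub_nonneg.mpr (sq_le_one_iff_abs_le_one r |>.mpr hr))

/-- The operator `V_s = c_s D_r R_s*` of the proof sketch, with `c_s = frameCoeff r s`. -/
noncomputable def radialFrame (r : ℝ) (hr : |r| ≤ 1) (s : List (Fin d)) :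
    FockSpace d →L[ℂ] FockSpace d :=
  lp.weightedComap (· ++ s) (List.append_left_injective s)
    (fun t => ((frameCoeff r s * r ^ t.length : ℝ) : ℂ)) fun t => by
      rw [Complex.norm_real, Real.norm_eq_abs, abs_mul, abs_pow]
      exact mul_le_one₀ (abs_frameCoeff_le_one s) (by positivity) (pow_le_one₀ (abs_nonneg r) hr)

noncomputable def frameWeight (r : ℝ) (s α : List (Fin d)) : ℝ :=
  if s <:+ α then (frameCoeff r s * r ^ (α.length - s.length)) ^ 2 else 0

theorem frameWeight_append (s t : List (Fin d)) :
    frameWeight r s (t ++ s) = (frameCoeff r s * r ^ t.length) ^ 2 := by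
  simp [frameWeight, List.suffix_append]

theorem frameWeight_of_not_suffix {s α : List (Fin d)} (h : ¬ s <:+ α) : frameWeight r s α = 0 :=
  if_neg h

theorem frameWeight_nonneg (s α : List (Fin d)) : 0 ≤ frameWeight r s α := by
  unfold frameWeight
  split <;> positivity

theorem frameWeight_cons {s α : List (Fin d)} (h : s <:+ α) (a : Fin d) :
    frameWeight r s (a :: α) = r ^ 2 * frameWeight r s α := by
  rw [frameWeight, frameWeight, if_pos (h.trans (List.suffix_cons a α)), if_pos h,
    List.length_cons, Nat.sub_add_comm h.length_le, pow_succ]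
  ring

theorem sum_frameWeight_tails (hr : |r| ≤ 1) (α : List (Fin d)) :
    ∑ s ∈ α.tails.toFinset, frameWeight r s α = 1 := by
  induction α with
  | nil => simp [frameWeight, frameCoeff]
  | cons a α ih =>
    have hnot : a :: α ∉ α.tails.toFinset := by
      simpa [List.mem_tails] using fun h => h.length_le.not_gt (by simp)
    rw [List.tails_cons, List.toFinset_cons, Finset.sum_insert hnot,
      Finset.sum_congr rfl fun s hs => frameWeight_cons (by simpa [List.mem_tails] using hs) a,
      ← Finset.mul_sum, ih, frameWeight, if_pos (List.suffix_refl _), Nat.sub_self, pow_zero,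
      mul_one, frameCoeff_cons_sq hr]
    ring

theorem sum_frameWeight_le_one (hr : |r| ≤ 1) (S : Finset (List (Fin d))) (α : List (Fin d)) :
    ∑ s ∈ S, frameWeight r s α ≤ 1 := by
  classical
  calc ∑ s ∈ S, frameWeight r s α = ∑ s ∈ S ∩ α.tails.toFinset, frameWeight r s α :=
        (Finset.sum_subset Finset.inter_subset_left fun s hS hs =>
          frameWeight_of_not_suffix fun h => hs (by simp [hS, List.mem_tails, h])).symm
    _ ≤ ∑ s ∈ α.tails.toFinset, frameWeight r s α :=
        Finset.sum_le_sum_of_subset_of_nonneg Finset.inter_subset_right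
          fun s _ _ => frameWeight_nonneg s α
    _ = 1 := sum_frameWeight_tails hr α

theorem sum_frameWeight_eq_one (hr : |r| ≤ 1) {S : Finset (List (Fin d))} {α : List (Fin d)}
    (hS : ∀ s, s <:+ α → s ∈ S) : ∑ s ∈ S, frameWeight r s α = 1 := by
  rw [← Finset.sum_subset (fun s hs => hS s ((List.mem_tails _ _).mp (List.mem_toFinset.mp hs)))
    fun s _ hs => frameWeight_of_not_suffix fun h =>
      hs (List.mem_toFinset.mpr ((List.mem_tails _ _).mpr h)),
    sum_frameWeight_tails hr]

theorem radialFrame_fockBasis_append (hr : |r| ≤ 1) (s t : List (Fin d)) :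
    radialFrame r hr s (fockBasis (t ++ s)) =
      ((frameCoeff r s * r ^ t.length : ℝ) : ℂ) • fockBasis t :=
  lp.weightedComap_single_apply t

theorem radialFrame_fockBasis_of_not_suffix (hr : |r| ≤ 1) {s α : List (Fin d)}
    (h : ¬ s <:+ α) : radialFrame r hr s (fockBasis α) = 0 :=
  lp.weightedComap_single_of_notMem_range fun ⟨t, ht⟩ => h ⟨t, ht⟩

theorem adjoint_radialFrame_fockBasis (hr : |r| ≤ 1) (s t : List (Fin d)) :
    adjoint (radialFrame r hr s) (fockBasis t) =
      ((frameCoeff r s * r ^ t.length : ℝ) : ℂ) • fockBasis (t ++ s) := by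
  rw [radialFrame, fockBasis, lp.adjoint_weightedComap_single, Complex.star_def,
    Complex.conj_ofReal]
  rfl

theorem norm_radialFrame_sq (hr : |r| ≤ 1) (s : List (Fin d)) (z : FockSpace d) :
    ‖radialFrame r hr s z‖ ^ 2 = ∑' α, frameWeight r s α * ‖z α‖ ^ 2 := by
  rw [radialFrame, lp.norm_weightedComap_sq,
    ← (List.append_left_injective s).tsum_eq (f := fun α => frameWeight r s α * ‖z α‖ ^ 2)]
  · simp only [frameWeight_append, Complex.norm_real, Real.norm_eq_abs, sq_abs]
  · refine Function.support_subset_iff'.mpr fun α h => ?_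
    simp only [frameWeight_of_not_suffix fun ⟨t, ht⟩ => h ⟨t, ht⟩, zero_mul]

theorem sum_norm_radialFrame_sq_le (hr : |r| ≤ 1) (S : Finset (List (Fin d))) (z : FockSpace d) :
    ∑ s ∈ S, ‖radialFrame r hr s z‖ ^ 2 ≤ ‖z‖ ^ 2 := by
  have hsum : ∀ s, Summable fun α => frameWeight r s α * ‖z α‖ ^ 2 := fun s =>
    (lp.summable_norm_sq z).of_nonneg_of_le
      (fun α => mul_nonneg (frameWeight_nonneg s α) (sq_nonneg _)) fun α =>
        mul_le_of_le_one_left (sq_nonneg _) (by simpa using sum_frameWeight_le_one hr {s} α)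
  simp_rw [norm_radialFrame_sq]
  rw [← Summable.tsum_finsetSum fun s _ => hsum s, lp.norm_sq_eq_tsum]
  refine (summable_sum fun s _ => hsum s).tsum_le_tsum (fun α => ?_) (lp.summable_norm_sq z)
  rw [← Finset.sum_mul]
  exact mul_le_of_le_one_left (sq_nonneg _) (sum_frameWeight_le_one hr S α)

theorem adjoint_radialFrame_comp_rightCreation (hr : |r| ≤ 1) (s t : List (Fin d)) :
    adjoint (radialFrame r hr s) ∘L rightCreation t =
      ((frameCoeff r s * r ^ t.length : ℝ) : ℂ) •
        (rightCreation (t ++ s) ∘L radialScaling r hr) := by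
  refine ext_on dense_span_fockBasis ?_
  rintro _ ⟨u, rfl⟩
  simp only [comp_apply, smul_apply, rightCreation_fockBasis, adjoint_radialFrame_fockBasis,
    radialScaling_fockBasis, map_smul, smul_smul, List.append_assoc, List.length_append, pow_add]
  congr 1
  push_cast
  ring

theorem sum_adjoint_radialFrame_comp_comp_fockBasis (hr : |r| ≤ 1)
    {T : FockSpace d →L[ℂ] FockSpace d} {f : FockSpace d}
    (hT : ∀ t, T (fockBasis t) = rightCreation t f) {S : Finset (List (Fin d))}
    {α : List (Fin d)} (hS : ∀ s, s <:+ α → s ∈ S) :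
    (∑ s ∈ S, adjoint (radialFrame r hr s) ∘L T ∘L radialFrame r hr s) (fockBasis α) =
      rightCreation α (radialScaling r hr f) := by
  have hterm : ∀ s, (adjoint (radialFrame r hr s) ∘L T ∘L radialFrame r hr s) (fockBasis α) =
      (frameWeight r s α : ℂ) • rightCreation α (radialScaling r hr f) := by
    intro s
    by_cases h : s <:+ α
    · obtain ⟨t, rfl⟩ := h
      have hV := congr($(adjoint_radialFrame_comp_rightCreation hr s t) f)
      simp only [comp_apply, smul_apply] at hV
      rw [comp_apply, comp_apply, radialFrame_fockBasis_append, map_smul, hT, map_smul, hV,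
        smul_smul, frameWeight_append]
      push_cast
      ring_nf
    · rw [comp_apply, comp_apply, radialFrame_fockBasis_of_not_suffix hr h, map_zero, map_zero,
        frameWeight_of_not_suffix h, Complex.ofReal_zero, zero_smul]
  rw [sum_apply, Finset.sum_congr rfl fun s _ => hterm s, ← Finset.sum_smul,
    ← Complex.ofReal_sum, sum_frameWeight_eq_one hr hS, Complex.ofReal_one, one_smul]

end RadialFrame

end FockSpace

open FockSpace

namespace MemWOTClosure

variable {d : ℕ} {A : Subalgebra ℂ (FockSpace d →L[ℂ] FockSpace d)}
  {T : FockSpace d →L[ℂ] FockSpace d}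

theorem inner_eq (hT : MemWOTClosure A T) {x₁ y₁ x₂ y₂ : FockSpace d}
    (h : ∀ p ∈ A, ⟪y₁, p x₁⟫ = ⟪y₂, p x₂⟫) : ⟪y₁, T x₁⟫ = ⟪y₂, T x₂⟫ := by
  classical
  refine sub_eq_zero.mp (norm_le_zero_iff.mp (le_of_forall_pos_lt_add fun ε hε => ?_))
  obtain ⟨p, hp, hclose⟩ := hT (ε / 2) (by positivity) {(x₁, y₁), (x₂, y₂)}
  have h₁ := hclose (x₁, y₁) (by simp)
  have h₂ := hclose (x₂, y₂) (by simp)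
  simp only [inner_sub_right] at h₁ h₂
  calc ‖⟪y₁, T x₁⟫ - ⟪y₂, T x₂⟫‖
      = ‖(⟪y₁, T x₁⟫ - ⟪y₁, p x₁⟫) - (⟪y₂, T x₂⟫ - ⟪y₂, p x₂⟫)‖ := by rw [h p hp]; ring_nf
    _ ≤ ‖⟪y₁, T x₁⟫ - ⟪y₁, p x₁⟫‖ + ‖⟪y₂, T x₂⟫ - ⟪y₂, p x₂⟫‖ := norm_sub_le _ _
    _ < 0 + ε := by linarith

theorem commute (hT : MemWOTClosure A T) {R : FockSpace d →L[ℂ] FockSpace d}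
    (hR : ∀ p ∈ A, Commute p R) : Commute T R := by
  refine ContinuousLinearMap.ext fun x => ext_inner_left ℂ fun y => ?_
  change ⟪y, T (R x)⟫ = ⟪y, R (T x)⟫
  rw [← adjoint_inner_left R]
  refine hT.inner_eq fun p hp => ?_
  rw [adjoint_inner_left]
  exact congr(⟪y, $((hR p hp).eq) x⟫)

theorem apply_fockBasis {L : Fin d → FockSpace d →L[ℂ] FockSpace d}
    (hL : ∀ (i : Fin d) (α : List (Fin d)), L i (fockBasis α) = fockBasis (i :: α))
    (hT : MemWOTClosure (Algebra.adjoin ℂ (Set.range L)) T) (α : List (Fin d)) :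
    T (fockBasis α) = rightCreation α (T (fockBasis [])) := by
  have hcomm : Commute T (rightCreation α) := hT.commute fun p hp =>
    (Algebra.commute_of_mem_adjoin_of_forall_mem_commute hp (by
      rintro _ ⟨i, rfl⟩
      exact (commute_rightCreation hL i α).symm)).symm
  conv_lhs => rw [← List.nil_append α, ← rightCreation_fockBasis]
  exact congr($hcomm.eq (fockBasis []))

end MemWOTClosure

/-- for `φ(L)` in the free Hardy algebra (the WOT-closed algebra
generated by the left creation operators `L`) and `0 < r < 1`, any radial dilate
`φ_r(L)` in the Hardy algebra with Fourier coefficients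
`⟨e_α, φ_r(L) e_∅⟩ = r^{|α|} ⟨e_α, φ(L) e_∅⟩` satisfies `‖φ_r(L)‖ ≤ ‖φ(L)‖`. -/
theorem radial_dilate_norm_le {d : ℕ}
    (L : Fin d → FockSpace d →L[ℂ] FockSpace d)
    (hL : ∀ (i : Fin d) (α : List (Fin d)), L i (fockBasis α) = fockBasis (i :: α))
    (φL φr : FockSpace d →L[ℂ] FockSpace d)
    (hφ : MemWOTClosure (Algebra.adjoin ℂ (Set.range L)) φL)
    (hφr : MemWOTClosure (Algebra.adjoin ℂ (Set.range L)) φr)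
    (r : ℝ) (hr0 : 0 < r) (hr1 : r < 1)
    (hcoeff : ∀ α : List (Fin d),
      ⟪fockBasis α, φr (fockBasis ([] : List (Fin d)))⟫
        = ((r ^ α.length : ℝ) : ℂ) * ⟪fockBasis α, φL (fockBasis ([] : List (Fin d)))⟫) :
    ‖φr‖ ≤ ‖φL‖ := by
  have hr : |r| ≤ 1 := abs_le.mpr ⟨by linarith, hr1.le⟩
  have hφr_nil : φr (fockBasis []) = radialScaling r hr (φL (fockBasis [])) :=
    ext_fockBasis fun α => by rw [hcoeff, inner_fockBasis_radialScaling]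
  refine norm_le_of_eventually_eq_sum_adjoint_comp_comp dense_span_fockBasis
    (sum_norm_radialFrame_sq_le hr) fun α => ?_
  filter_upwards [eventually_ge_atTop α.tails.toFinset] with S hS
  rw [hφr.apply_fockBasis hL, hφr_nil, sum_adjoint_radialFrame_comp_comp_fockBasis hr
    (hφ.apply_fockBasis hL) fun s hs => hS (List.mem_toFinset.mpr ((List.mem_tails _ _).mpr hs))]
end

section
/- Let K(α,β) = W* S^α P (S^β)* W be a dilation of the moment kernel with isometry W, projection P = JJ*, and Cuntz family S, where J : H' → K is an isometry and B_i := J* S_i* J satisfy ∑_i B_i* B_i ≤ I. Then for every vector y in the cyclic subspace M = span{(S^γ)* W H}, one has ∑_{i=1}^d ‖J* S_i* y‖² ≤ ‖J* y‖²; equivalently ∑_i S_i P S_i* ≤ P on M. -/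
open scoped ComplexInnerProductSpace

noncomputable def opWord {H : Type*} [NormedAddCommGroup H] [NormedSpace ℂ H]
    {d : ℕ} (S : Fin d → H →L[ℂ] H) (α : List (Fin d)) : H →L[ℂ] H :=
  (α.map S).prod

lemma opWord_append {H : Type*} [NormedAddCommGroup H] [NormedSpace ℂ H]
    {d : ℕ} (S : Fin d → H →L[ℂ] H) (l₁ l₂ : List (Fin d)) :
    opWord S (l₁ ++ l₂) = opWord S l₁ ∘L opWord S l₂ := by
  simp [opWord, List.prod_append]
  rfl

lemma opWord_cons {H : Type*} [NormedAddCommGroup H] [NormedSpace ℂ H]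
    {d : ℕ} (S : Fin d → H →L[ℂ] H) (i : Fin d) (l : List (Fin d)) :
    opWord S (i :: l) = S i ∘L opWord S l := by
  simp [opWord]
  rfl

lemma opWord_singleton {H : Type*} [NormedAddCommGroup H] [NormedSpace ℂ H]
    {d : ℕ} (S : Fin d → H →L[ℂ] H) (i : Fin d) :
    opWord S [i] = S i := by
  simp [opWord]

set_option maxHeartbeats 1600000 in
/-- in the dilation `K(α,β) = W* S^α P (S^β)* W` with `P = JJ*`,
`B_i = J* S_i* J`, `∑ B_i* B_i ≤ I`, and `J* (S^α)* J = B^{α̃}`, every `y` in the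
cyclic subspace `M = span{(S^γ)* W H}` satisfies
`∑ᵢ ‖J* Sᵢ* y‖² ≤ ‖J* y‖²`; equivalently `∑ᵢ Sᵢ P Sᵢ* ≤ P` on `M`. -/
theorem dilation_defect_inequality
    {H H' K : Type*}
    [NormedAddCommGroup H] [InnerProductSpace ℂ H] [CompleteSpace H]
    [NormedAddCommGroup H'] [InnerProductSpace ℂ H'] [CompleteSpace H']
    [NormedAddCommGroup K] [InnerProductSpace ℂ K] [CompleteSpace K]
    {d : ℕ} (S : Fin d → K →L[ℂ] K)
    (hortho : ∀ i j, (ContinuousLinearMap.adjoint (S i)) ∘L (S j)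
      = if i = j then (1 : K →L[ℂ] K) else 0)
    (hcuntz : ∑ i, (S i) ∘L (ContinuousLinearMap.adjoint (S i)) = (1 : K →L[ℂ] K))
    (J : H' →L[ℂ] K) (hJ : ∀ x : H', ‖J x‖ = ‖x‖)
    (B : Fin d → H' →L[ℂ] H')
    (hBdef : ∀ i, B i = (ContinuousLinearMap.adjoint J) ∘L
      (ContinuousLinearMap.adjoint (S i)) ∘L J)
    (hB : ((1 : H' →L[ℂ] H') -
      ∑ i, (ContinuousLinearMap.adjoint (B i)) ∘L (B i)).IsPositive)
    (V : H →L[ℂ] H') (hV : ∀ u : H, ‖V u‖ = ‖u‖)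
    (W : H →L[ℂ] K) (hW : W = J ∘L V)
    (hdil : ∀ α : List (Fin d),
      (ContinuousLinearMap.adjoint J) ∘L
        (ContinuousLinearMap.adjoint (opWord S α)) ∘L J = opWord B α.reverse) :
    ∀ y ∈ (Submodule.span ℂ
        {x : K | ∃ (γ : List (Fin d)) (u : H),
          x = (ContinuousLinearMap.adjoint (opWord S γ)) (W u)}).topologicalClosure,
      (∑ i, ‖(ContinuousLinearMap.adjoint J)
          ((ContinuousLinearMap.adjoint (S i)) y)‖ ^ 2
        ≤ ‖(ContinuousLinearMap.adjoint J) y‖ ^ 2) ∧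
      ((∑ i, ⟪y, (S i) ((J ∘L (ContinuousLinearMap.adjoint J))
            ((ContinuousLinearMap.adjoint (S i)) y))⟫).re
        ≤ (⟪y, (J ∘L (ContinuousLinearMap.adjoint J)) y⟫).re) := by
  intro y hy
  set s : Set K := {x : K | ∃ (γ : List (Fin d)) (u : H),
      x = (ContinuousLinearMap.adjoint (opWord S γ)) (W u)} with hs
  -- key intertwining: J* S_i* y = B_i J* y on the closed span
  have key : ∀ i : Fin d,
      (ContinuousLinearMap.adjoint J) ((ContinuousLinearMap.adjoint (S i)) y)
        = B i ((ContinuousLinearMap.adjoint J) y) := by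
    intro i
    set F : K →L[ℂ] H' :=
      (ContinuousLinearMap.adjoint J) ∘L (ContinuousLinearMap.adjoint (S i)) with hF
    set G : K →L[ℂ] H' := B i ∘L (ContinuousLinearMap.adjoint J) with hG
    have hgen : Set.EqOn F G s := by
      rintro x ⟨γ, u, rfl⟩
      have h1 : opWord S (γ ++ [i]) = opWord S γ ∘L S i := by
        rw [opWord_append, opWord_singleton]
      have h2 : opWord B ((γ ++ [i]).reverse) = B i ∘L opWord B γ.reverse := by
        rw [List.reverse_append, List.reverse_singleton, List.singleton_append,
          opWord_cons]
      have hdil1 := hdil (γ ++ [i])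
      rw [h1, h2] at hdil1
      have hdil2 := hdil γ
      have e1 : F ((ContinuousLinearMap.adjoint (opWord S γ)) (W u))
          = ((ContinuousLinearMap.adjoint J) ∘L
              (ContinuousLinearMap.adjoint (opWord S γ ∘L S i)) ∘L J) (V u) := by
        simp [hF, hW, ContinuousLinearMap.adjoint_comp]
      have e2 : G ((ContinuousLinearMap.adjoint (opWord S γ)) (W u))
          = B i (((ContinuousLinearMap.adjoint J) ∘L
              (ContinuousLinearMap.adjoint (opWord S γ)) ∘L J) (V u)) := by
        simp [hG, hW]
      rw [e1, e2, hdil1, hdil2]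
      rfl
    have hspan : Set.EqOn F G (Submodule.span ℂ s : Set K) := by
      intro x hx
      exact LinearMap.eqOn_span hgen hx
    have hclos : Set.EqOn F G (closure (Submodule.span ℂ s : Set K)) :=
      Set.EqOn.closure hspan F.continuous G.continuous
    exact hclos hy
  set z : H' := (ContinuousLinearMap.adjoint J) y with hz
  -- ∑ ‖B i z‖² ≤ ‖z‖² from positivity of 1 - ∑ B_i* B_i
  have hsum : ∑ i, ‖B i z‖ ^ 2 ≤ ‖z‖ ^ 2 := by
    have hpos := hB.2 z
    rw [ContinuousLinearMap.reApplyInnerSelf_apply] at hpos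
    have expand : RCLike.re
        (⟪(((1 : H' →L[ℂ] H') -
            ∑ i, (ContinuousLinearMap.adjoint (B i)) ∘L (B i)) z), z⟫)
        = ‖z‖ ^ 2 - ∑ i, ‖B i z‖ ^ 2 := by
      rw [ContinuousLinearMap.sub_apply, inner_sub_left]
      simp only [map_sub]
      congr 1
      · rw [ContinuousLinearMap.one_apply, ← inner_self_eq_norm_sq (𝕜 := ℂ)]
      · rw [ContinuousLinearMap.sum_apply, sum_inner, map_sum]
        refine Finset.sum_congr rfl fun i _ => ?_
        rw [ContinuousLinearMap.comp_apply, ContinuousLinearMap.adjoint_inner_left,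
          ← inner_self_eq_norm_sq (𝕜 := ℂ)]
    rw [expand] at hpos
    linarith
  have hfirst : ∑ i, ‖(ContinuousLinearMap.adjoint J)
      ((ContinuousLinearMap.adjoint (S i)) y)‖ ^ 2
      ≤ ‖(ContinuousLinearMap.adjoint J) y‖ ^ 2 := by
    calc ∑ i, ‖(ContinuousLinearMap.adjoint J)
          ((ContinuousLinearMap.adjoint (S i)) y)‖ ^ 2
        = ∑ i, ‖B i z‖ ^ 2 := by
          refine Finset.sum_congr rfl fun i _ => ?_
          rw [key i]
      _ ≤ ‖z‖ ^ 2 := hsum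
  refine ⟨hfirst, ?_⟩
  -- the second form reduces to the first
  have eL : ∀ i : Fin d, (⟪y, (S i) ((J ∘L (ContinuousLinearMap.adjoint J))
        ((ContinuousLinearMap.adjoint (S i)) y))⟫).re
      = ‖(ContinuousLinearMap.adjoint J)
          ((ContinuousLinearMap.adjoint (S i)) y)‖ ^ 2 := by
    intro i
    have h1 : ⟪y, (S i) ((J ∘L (ContinuousLinearMap.adjoint J))
          ((ContinuousLinearMap.adjoint (S i)) y))⟫
        = ⟪(ContinuousLinearMap.adjoint J) ((ContinuousLinearMap.adjoint (S i)) y),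
            (ContinuousLinearMap.adjoint J) ((ContinuousLinearMap.adjoint (S i)) y)⟫ := by
      rw [ContinuousLinearMap.comp_apply,
        ← ContinuousLinearMap.adjoint_inner_left (S i),
        ← ContinuousLinearMap.adjoint_inner_left J]
    rw [h1]
    have h2 := inner_self_eq_norm_sq (𝕜 := ℂ)
      (x := (ContinuousLinearMap.adjoint J) ((ContinuousLinearMap.adjoint (S i)) y))
    simpa using h2
  have eR : (⟪y, (J ∘L (ContinuousLinearMap.adjoint J)) y⟫).re
      = ‖(ContinuousLinearMap.adjoint J) y‖ ^ 2 := by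
    have h1 : ⟪y, (J ∘L (ContinuousLinearMap.adjoint J)) y⟫
        = ⟪(ContinuousLinearMap.adjoint J) y, (ContinuousLinearMap.adjoint J) y⟫ := by
      rw [ContinuousLinearMap.comp_apply, ← ContinuousLinearMap.adjoint_inner_left J]
    rw [h1]
    have h2 := inner_self_eq_norm_sq (𝕜 := ℂ) (x := (ContinuousLinearMap.adjoint J) y)
    simpa using h2
  rw [Complex.re_sum, Finset.sum_congr rfl fun i _ => eL i, eR]
  exact hfirst
end
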